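/- arXiv:1911.02053 — 2 statements merged into one kernel-verified Lean document; each statement's English description precedes it below -/
import Mathlib

section
/- For symmetric positive definite matrices Σ₁, Σ₂, the matrix T = Σ₁^{−1/2} (Σ₁^{1/2} Σ₂ Σ₁^{1/2})^{1/2} Σ₁^{−1/2} is symmetric positive definite and satisfies T Σ₁ T = Σ₂. -/
/-!
With `A = Σ₁^{1/2}` and `R = (A Σ₂ A)^{1/2}`, the map is `T = A⁻¹ R A⁻¹`. Both square roots are
positive definite because their squares are, so `T` is a congruence of the positive definite `R`
by the symmetric invertible `A⁻¹`; and `T Σ₁ T = A⁻¹ R (A⁻¹ A A A⁻¹) R A⁻¹ = A⁻¹ R² A⁻¹ = Σ₂`.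
-/

open Matrix

namespace Matrix.PosSemidef

open scoped ComplexOrder

/-- The square root of a positive semidefinite matrix, as defined in Mathlib (Dec 2024);
removed from current Mathlib, reinstated here with its old definition. -/
noncomputable def sqrt {n 𝕜 : Type*} [Fintype n] [RCLike 𝕜] [DecidableEq n]
    {A : Matrix n n 𝕜} (hA : PosSemidef A) : Matrix n n 𝕜 :=
  (hA.1.eigenvectorUnitary : Matrix n n 𝕜) *
    diagonal (((↑) : ℝ → 𝕜) ∘ (√·) ∘ hA.1.eigenvalues) *
    (star hA.1.eigenvectorUnitary : Matrix n n 𝕜)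

lemma posSemidef_sqrt {n 𝕜 : Type*} [Fintype n] [RCLike 𝕜] [DecidableEq n]
    {A : Matrix n n 𝕜} (hA : PosSemidef A) : PosSemidef hA.sqrt := by
  unfold sqrt
  have hd : PosSemidef (diagonal (((↑) ∘ (√·) ∘ hA.1.eigenvalues : n → 𝕜))) := by
    refine posSemidef_diagonal_iff.mpr fun i => ?_
    simp only [Function.comp_apply]
    exact_mod_cast Real.sqrt_nonneg _
  have := hd.mul_mul_conjTranspose_same (hA.1.eigenvectorUnitary : Matrix n n 𝕜)
  simpa [star_eq_conjTranspose] using this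

end Matrix.PosSemidef

/-- `√Σ₁ Σ₂ √Σ₁` is positive semidefinite. -/
lemma sqrt_mul_sqrt_posSemidef {d : ℕ} {S1 S2 : Matrix (Fin d) (Fin d) ℝ}
    (h1 : S1.PosSemidef) (h2 : S2.PosSemidef) :
    (h1.sqrt * S2 * h1.sqrt).PosSemidef := by
  have h := h2.mul_mul_conjTranspose_same h1.sqrt
  rwa [h1.posSemidef_sqrt.1.eq] at h

namespace Matrix

open scoped ComplexOrder

variable {n : Type*} [Fintype n] [DecidableEq n]

theorem PosDef.mul_mul_same_of_isHermitian {R : Type*} [Ring R] [PartialOrder R] [StarRing R]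
    {A M : Matrix n n R} (hM : M.PosDef) (hA : A.IsHermitian) (hAu : IsUnit A) :
    (A * M * A).PosDef := by
  simpa [star_eq_conjTranspose, hA.eq] using (IsUnit.posDef_star_left_conjugate_iff hAu).mpr hM

theorem nonsing_inv_mul_mul_nonsing_inv_riccati {α : Type*} [CommRing α] {A R S : Matrix n n α}
    (hA : IsUnit A) (hR : R * R = A * S * A) :
    (A⁻¹ * R * A⁻¹) * (A * A) * (A⁻¹ * R * A⁻¹) = S := by
  have hAinv : A⁻¹ * A = 1 := nonsing_inv_mul A ((isUnit_iff_isUnit_det A).mp hA)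
  have hinvA : A * A⁻¹ = 1 := mul_nonsing_inv A ((isUnit_iff_isUnit_det A).mp hA)
  calc (A⁻¹ * R * A⁻¹) * (A * A) * (A⁻¹ * R * A⁻¹)
      = A⁻¹ * R * (A⁻¹ * A) * (A * A⁻¹) * R * A⁻¹ := by simp only [Matrix.mul_assoc]
    _ = A⁻¹ * (R * R) * A⁻¹ := by
        rw [hAinv, hinvA]; simp only [Matrix.mul_one, Matrix.mul_assoc]
    _ = (A⁻¹ * A) * S * (A * A⁻¹) := by rw [hR]; simp only [Matrix.mul_assoc]
    _ = S := by rw [hAinv, hinvA, Matrix.one_mul, Matrix.mul_one]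

variable {𝕜 : Type*} [RCLike 𝕜]

theorem PosSemidef.sqrt_mul_self {A : Matrix n n 𝕜} (hA : A.PosSemidef) :
    hA.sqrt * hA.sqrt = A := by
  set U : Matrix n n 𝕜 := (hA.1.eigenvectorUnitary : Matrix n n 𝕜)
  set V : Matrix n n 𝕜 := (star hA.1.eigenvectorUnitary : Matrix n n 𝕜)
  set D : Matrix n n 𝕜 := diagonal ((RCLike.ofReal : ℝ → 𝕜) ∘ (√·) ∘ hA.1.eigenvalues)
  have hU : V * U = 1 := Unitary.coe_star_mul_self _
  have hD : D * D = diagonal (RCLike.ofReal ∘ hA.1.eigenvalues) := by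
    rw [diagonal_mul_diagonal]
    congr 1
    funext i
    simp only [Function.comp_apply]
    rw [← RCLike.ofReal_mul, Real.mul_self_sqrt (hA.eigenvalues_nonneg i)]
  calc hA.sqrt * hA.sqrt = U * (D * (V * U) * D) * V := by
        simp only [sqrt, U, V, D, Matrix.mul_assoc]
    _ = A := by
        rw [hU, Matrix.mul_one, hD]
        conv_rhs => rw [hA.1.spectral_theorem, Unitary.conjStarAlgAut_apply]

theorem PosDef.posDef_sqrt {A : Matrix n n 𝕜} (hA : A.PosDef) : hA.posSemidef.sqrt.PosDef :=
  hA.posSemidef.posSemidef_sqrt.posDef_iff_isUnit.mpr <|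
    isUnit_of_mul_isUnit_left (hA.posSemidef.sqrt_mul_self ▸ hA.isUnit)

end Matrix

/-- The Gaussian optimal transport map
`T = Σ₁^{−1/2} (Σ₁^{1/2} Σ₂ Σ₁^{1/2})^{1/2} Σ₁^{−1/2}` is symmetric positive definite and
pushes `Σ₁` to `Σ₂`: `T Σ₁ T = Σ₂`. -/
theorem transport_map_posDef_and_pushforward {d : ℕ} {S1 S2 : Matrix (Fin d) (Fin d) ℝ}
    (h1 : S1.PosDef) (h2 : S2.PosDef)
    (T : Matrix (Fin d) (Fin d) ℝ)
    (hT : T = h1.posSemidef.sqrt⁻¹ *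
      (sqrt_mul_sqrt_posSemidef h1.posSemidef h2.posSemidef).sqrt * h1.posSemidef.sqrt⁻¹) :
    T.PosDef ∧ T * S1 * T = S2 := by
  have hA : h1.posSemidef.sqrt.PosDef := h1.posDef_sqrt
  have hASA : (h1.posSemidef.sqrt * S2 * h1.posSemidef.sqrt).PosDef :=
    h2.mul_mul_same_of_isHermitian hA.1 hA.isUnit
  subst hT
  constructor
  · exact hASA.posDef_sqrt.mul_mul_same_of_isHermitian hA.inv.1 hA.inv.isUnit
  · have := nonsing_inv_mul_mul_nonsing_inv_riccati hA.isUnit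
      (sqrt_mul_sqrt_posSemidef h1.posSemidef h2.posSemidef).sqrt_mul_self
    rwa [h1.posSemidef.sqrt_mul_self] at this
end

section
/- For strictly increasing tuples p, q ∈ ℝ^K, the quotient distance on Conf_K(ℝ)/S_K satisfies D([p],[q])² = Σ_{i=1}^K (p_i − q_i)², i.e., the quotient distance between orbits of sorted tuples equals the Euclidean distance between the sorted representatives. -/
/-! Expanding the squares, `∑ (pᵢ - q_{σ i})² = ∑ pᵢ² + ∑ qᵢ² - 2 ∑ pᵢ q_{σ i}`, and only the
cross term depends on `σ`. Since sorted tuples monovary, the rearrangement inequality says the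
cross term is largest for `σ = 1`. -/

open Finset Equiv

theorem sum_sub_sq_eq {ι α : Type*} [Fintype ι] [CommRing α] (p r : ι → α) :
    ∑ i, (p i - r i) ^ 2 = ∑ i, p i ^ 2 + ∑ i, r i ^ 2 - 2 * ∑ i, p i * r i := by
  rw [mul_sum, ← sum_add_distrib, ← sum_sub_distrib]
  exact sum_congr rfl fun i _ => by ring

theorem Monovary.sum_sub_sq_le_sum_sub_comp_perm_sq {ι α : Type*} [Fintype ι] [CommRing α]
    [LinearOrder α] [IsStrictOrderedRing α] {p q : ι → α} (h : Monovary p q)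
    (σ : Perm ι) : ∑ i, (p i - q i) ^ 2 ≤ ∑ i, (p i - q (σ i)) ^ 2 := by
  have hcross : ∑ i, p i * q (σ i) ≤ ∑ i, p i * q i := h.sum_mul_comp_perm_le_sum_mul
  have hsq : ∑ i, q (σ i) ^ 2 = ∑ i, q i ^ 2 := Equiv.sum_comp σ (q · ^ 2)
  rw [sum_sub_sq_eq p q, sum_sub_sq_eq p (fun i => q (σ i)), hsq]
  linarith

theorem quotient_dist_sorted_general {K : ℕ} (p q : Fin K → ℝ)
    (hp : StrictMono p) (hq : StrictMono q) :
    Finset.univ.inf' Finset.univ_nonempty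
        (fun σ : Equiv.Perm (Fin K) => ∑ i, (p i - q (σ i)) ^ 2) =
      ∑ i, (p i - q i) ^ 2 := by
  refine le_antisymm ?_ (le_inf' _ _ fun σ _ => ?_)
  · exact inf'_le_of_le _ (mem_univ 1) le_rfl
  · exact (hp.monotone.monovary hq.monotone).sum_sub_sq_le_sum_sub_comp_perm_sq σ

/-- For strictly increasing tuples `p, q`, the squared quotient distance on
`Conf_K(ℝ)/S_K` equals the Euclidean distance between the sorted representatives:
`min_{σ∈S_K} ∑ᵢ (pᵢ − q_{σ(i)})² = ∑ᵢ (pᵢ − qᵢ)²`. -/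
theorem quotient_dist_sorted {K : ℕ} (hK : 0 < K) (p q : Fin K → ℝ)
    (hp : StrictMono p) (hq : StrictMono q) :
    Finset.univ.inf' Finset.univ_nonempty
        (fun σ : Equiv.Perm (Fin K) => ∑ i, (p i - q (σ i)) ^ 2) =
      ∑ i, (p i - q i) ^ 2 :=
  quotient_dist_sorted_general p q hp hq
end
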